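/- Let P be a quaternionic projection-valued measure over ℂ_ι⁺ in a quaternionic Hilbert space H, and let 𝓛 : q ↦ L_q be a left scalar multiplication of H commuting with P. For every simple function s = Σ_{ℓ=1}^n S_ℓ χ_{E_ℓ} with S_ℓ ∈ ℍ and pairwise disjoint Borel sets E_ℓ, the operator ∫ s dP := Σ_ℓ L_{S_ℓ} P(E_ℓ) satisfies ‖∫ s dP‖ = ‖s‖_∞^{(P)}, where ‖s‖_∞^{(P)} := inf{k ≥ 0 : P({|s| > k}) = 0}. -/

import Mathlib

noncomputable section

notation "ℍ" => Quaternion ℝ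

open MeasureTheory Filter

/-- Borel σ-algebra on the quaternions. -/
instance : MeasurableSpace ℍ := borel ℍ

instance : BorelSpace ℍ := ⟨rfl⟩

/-- A quaternionic (right) Hilbert space structure on a normed additive group `H`:
a right scalar multiplication by quaternions together with an ℍ-valued Hermitian
scalar product compatible with the norm.  (Completeness of `H` is assumed
separately via `[CompleteSpace H]`.) -/
structure QHS (H : Type) [NormedAddCommGroup H] where
  smul : H → ℍ → H
  inn : H → H → ℍ
  add_smul' : ∀ (u v : H) (q : ℍ), smul (u + v) q = smul u q + smul v q
  smul_add' : ∀ (u : H) (p q : ℍ), smul u (p + q) = smul u p + smul u q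
  smul_mul' : ∀ (u : H) (p q : ℍ), smul u (p * q) = smul (smul u p) q
  smul_one' : ∀ u : H, smul u 1 = u
  inn_add_right : ∀ u v w : H, inn u (v + w) = inn u v + inn u w
  inn_smul_right : ∀ (u v : H) (q : ℍ), inn u (smul v q) = inn u v * q
  inn_conj : ∀ u v : H, inn u v = star (inn v u)
  inn_self_real : ∀ u : H, inn u u = (((inn u u).re : ℝ) : ℍ)
  norm_sq' : ∀ u : H, ‖u‖ ^ 2 = (inn u u).re

variable {H : Type} [NormedAddCommGroup H]

/-- The graph of an operator `T` with domain `D`. -/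
def graphOf (T : H → H) (D : Set H) : Set (H × H) := {p | p.1 ∈ D ∧ p.2 = T p.1}

/-- Domain of a graph. -/
def graphDom (G : Set (H × H)) : Set H := {u | ∃ w, (u, w) ∈ G}

/-- A function extracted from a graph (by choice). -/
def graphFun (G : Set (H × H)) : H → H := fun u =>
  letI : Nonempty H := ⟨0⟩
  Classical.epsilon fun w => (u, w) ∈ G

/-- Boundedness of an everywhere defined operator. -/
def BoundedOp (T : H → H) : Prop := ∃ C : ℝ, ∀ u : H, ‖T u‖ ≤ C * ‖u‖

/-- The operator norm. -/
def opNorm (T : H → H) : ℝ := sInf {C : ℝ | 0 ≤ C ∧ ∀ u : H, ‖T u‖ ≤ C * ‖u‖}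

/-- Closed operator: the graph is closed. -/
def ClosedOp (T : H → H) (D : Set H) : Prop := IsClosed (graphOf T D)

/-- The domain `D(T²)`. -/
def D2 (T : H → H) (D : Set H) : Set H := {u ∈ D | T u ∈ D}

/-- The slice complex plane `ℂ_ι = {a + ι b}` determined by an imaginary unit `ι`. -/
def Cslice (ι : ℍ) : Set ℍ :=
  {x : ℍ | ∃ a b : ℝ, x = ((a : ℝ) : ℍ) + ι * ((b : ℝ) : ℍ)}

/-- The closed upper half slice plane `ℂ_ι⁺ = {a + ι b : b ≥ 0}`. -/
def Cplus (ι : ℍ) : Set ℍ :=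
  {x : ℍ | ∃ a b : ℝ, 0 ≤ b ∧ x = ((a : ℝ) : ℍ) + ι * ((b : ℝ) : ℍ)}

namespace QHS

variable (𝒮 : QHS H)

/-- Right ℍ-linearity of an everywhere defined map. -/
def RightLinear (T : H → H) : Prop :=
  (∀ u v : H, T (u + v) = T u + T v) ∧ ∀ (u : H) (q : ℍ), T (𝒮.smul u q) = 𝒮.smul (T u) q

/-- A (right ℍ-linear) subspace. -/
def IsSubspace (D : Set H) : Prop :=
  (0 : H) ∈ D ∧ (∀ u ∈ D, ∀ v ∈ D, u + v ∈ D) ∧ ∀ u ∈ D, ∀ q : ℍ, 𝒮.smul u q ∈ D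

/-- Right ℍ-linearity on a domain `D`. -/
def RightLinearOn (T : H → H) (D : Set H) : Prop :=
  (∀ u ∈ D, ∀ v ∈ D, T (u + v) = T u + T v) ∧
    ∀ u ∈ D, ∀ q : ℍ, T (𝒮.smul u q) = 𝒮.smul (T u) q

/-- `S` is the adjoint of `T` (both everywhere defined):  `⟨S u|v⟩ = ⟨u|T v⟩`. -/
def AdjointPair (T S : H → H) : Prop := ∀ u v : H, 𝒮.inn (S u) v = 𝒮.inn u (T v)

def SelfAdjointOp (T : H → H) : Prop := ∀ u v : H, 𝒮.inn (T u) v = 𝒮.inn u (T v)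

def AntiSelfAdjointOp (T : H → H) : Prop := ∀ u v : H, 𝒮.inn (T u) v = -𝒮.inn u (T v)

/-- Positivity: `⟨u|T u⟩` is real and non-negative. -/
def PositiveOp (T : H → H) : Prop :=
  ∀ u : H, 𝒮.inn u (T u) = ((((𝒮.inn u (T u)).re : ℝ)) : ℍ) ∧ 0 ≤ (𝒮.inn u (T u)).re

/-- Positivity on a domain. -/
def PositiveOn (T : H → H) (D : Set H) : Prop :=
  ∀ u ∈ D, 𝒮.inn u (T u) = ((((𝒮.inn u (T u)).re : ℝ)) : ℍ) ∧ 0 ≤ (𝒮.inn u (T u)).re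

/-- Unitarity: right linear, surjective, inner-product preserving. -/
def UnitaryOp (T : H → H) : Prop :=
  𝒮.RightLinear T ∧ Function.Surjective T ∧ ∀ u v : H, 𝒮.inn (T u) (T v) = 𝒮.inn u v

/-- The domain of the adjoint of `T : D → H`. -/
def adjDom (T : H → H) (D : Set H) : Set H :=
  {u : H | ∃ w : H, ∀ v ∈ D, 𝒮.inn w v = 𝒮.inn u (T v)}

/-- The adjoint operator of `T : D → H` (defined by choice; it is the genuine
adjoint when `D` is dense). -/
def adjOp (T : H → H) (D : Set H) : H → H := fun u =>
  letI := Classical.propDecidable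
  if h : ∃ w : H, ∀ v ∈ D, 𝒮.inn w v = 𝒮.inn u (T v) then h.choose else 0

/-- Self-adjointness of an unbounded operator: `T* = T` (same domain, same values). -/
def SelfAdjointUnb (T : H → H) (D : Set H) : Prop :=
  𝒮.adjDom T D = D ∧ ∀ u ∈ D, 𝒮.adjOp T D u = T u

/-- Normality of an unbounded operator: `T T* = T* T`. -/
def NormalUnb (T : H → H) (D : Set H) : Prop :=
  ({u ∈ D | T u ∈ 𝒮.adjDom T D} = {u ∈ 𝒮.adjDom T D | 𝒮.adjOp T D u ∈ D}) ∧
    ∀ u ∈ D, T u ∈ 𝒮.adjDom T D → 𝒮.adjOp T D (T u) = T (𝒮.adjOp T D u)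

/-- The positive square root of a positive bounded operator (by choice). -/
def posSqrt (T : H → H) : H → H :=
  letI : Nonempty (H → H) := ⟨id⟩
  Classical.epsilon fun R : H → H =>
    𝒮.RightLinear R ∧ BoundedOp R ∧ 𝒮.PositiveOp R ∧ 𝒮.SelfAdjointOp R ∧
      ∀ u : H, R (R u) = T u

/-- The operator `Δ_q(T) = T² - T (2 Re q) + |q|² 1`. -/
def Delta (T : H → H) (q : ℍ) : H → H := fun u =>
  T (T u) - 𝒮.smul (T u) (((2 * q.re : ℝ)) : ℍ) + 𝒮.smul u (((‖q‖ ^ 2 : ℝ)) : ℍ)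

/-- Membership in the spherical resolvent set: `Δ_q(T)` is injective with dense range
and bounded inverse. -/
def InSphResolvent (T : H → H) (D : Set H) (q : ℍ) : Prop :=
  (∀ u ∈ D2 T D, 𝒮.Delta T q u = 0 → u = 0) ∧
    Dense (𝒮.Delta T q '' D2 T D) ∧
    ∃ C : ℝ, ∀ u ∈ D2 T D, ‖u‖ ≤ C * ‖𝒮.Delta T q u‖

/-- The spherical spectrum. -/
def sphSpectrum (T : H → H) (D : Set H) : Set ℍ := {q | ¬𝒮.InSphResolvent T D q}

/-- The spherical point spectrum. -/
def sphPointSpectrum (T : H → H) (D : Set H) : Set ℍ :=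
  {q | ∃ u ∈ D2 T D, u ≠ 0 ∧ 𝒮.Delta T q u = 0}

/-- The spherical residual spectrum. -/
def sphResidualSpectrum (T : H → H) (D : Set H) : Set ℍ :=
  {q | (∀ u ∈ D2 T D, 𝒮.Delta T q u = 0 → u = 0) ∧
    ¬Dense (𝒮.Delta T q '' D2 T D)}

/-- The spherical continuous spectrum. -/
def sphContinuousSpectrum (T : H → H) (D : Set H) : Set ℍ :=
  {q | (∀ u ∈ D2 T D, 𝒮.Delta T q u = 0 → u = 0) ∧
    Dense (𝒮.Delta T q '' D2 T D) ∧
    ¬∃ C : ℝ, ∀ u ∈ D2 T D, ‖u‖ ≤ C * ‖𝒮.Delta T q u‖}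

/-- A Hilbert basis of a quaternionic Hilbert space. -/
def IsHilbertBasis (N : Set H) : Prop :=
  (∀ z ∈ N, ‖z‖ = 1) ∧ (∀ z ∈ N, ∀ w ∈ N, z ≠ w → 𝒮.inn z w = 0) ∧
    ∀ u : H, (∀ z ∈ N, 𝒮.inn z u = 0) → u = 0

/-- `L` is the left scalar multiplication induced by the Hilbert basis `N`:
`L_q u = Σ_{z ∈ N} z q ⟨z|u⟩`. -/
def IsInducedLSM (N : Set H) (L : ℍ → H → H) : Prop :=
  ∀ (q : ℍ) (u : H),
    HasSum (fun z : N => 𝒮.smul (z : H) (q * 𝒮.inn (z : H) u)) (L q u)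

/-- `L` is a left scalar multiplication of `H` (induced by some Hilbert basis). -/
def IsLSM (L : ℍ → H → H) : Prop :=
  ∃ N : Set H, 𝒮.IsHilbertBasis N ∧ 𝒮.IsInducedLSM N L

/-- The orthogonal complement of a subset. -/
def orthC (S : Set H) : Set H := {u : H | ∀ v ∈ S, 𝒮.inn u v = 0}

/-- The complex subspace `H₊^{Jι} = {u : J u = u ι}`. -/
def Hplus (J : H → H) (ι : ℍ) : Set H := {u : H | J u = 𝒮.smul u ι}

/-- The complex subspace `H₋^{Jι} = {u : J u = -u ι}`. -/
def Hminus (J : H → H) (ι : ℍ) : Set H := {u : H | J u = -𝒮.smul u ι}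

end QHS

/-- A quaternionic projection valued measure (qPVM) over `ℂ_ι⁺` in `H`. -/
structure IsQPVM (𝒮 : QHS H) (ι : ℍ) (P : Set ℍ → H → H) : Prop where
  proj_linear : ∀ E : Set ℍ, MeasurableSet E → E ⊆ Cplus ι → 𝒮.RightLinear (P E)
  proj_bounded : ∀ E : Set ℍ, MeasurableSet E → E ⊆ Cplus ι → BoundedOp (P E)
  proj_idem : ∀ E : Set ℍ, MeasurableSet E → E ⊆ Cplus ι → ∀ u, P E (P E u) = P E u
  proj_sa : ∀ E : Set ℍ, MeasurableSet E → E ⊆ Cplus ι → 𝒮.SelfAdjointOp (P E)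
  proj_pos : ∀ E : Set ℍ, MeasurableSet E → E ⊆ Cplus ι → 𝒮.PositiveOp (P E)
  total : ∀ u : H, P (Cplus ι) u = u
  inter : ∀ E F : Set ℍ, MeasurableSet E → E ⊆ Cplus ι → MeasurableSet F → F ⊆ Cplus ι →
    ∀ u, P (E ∩ F) u = P E (P F u)
  sigma_add : ∀ E : ℕ → Set ℍ, (∀ n, MeasurableSet (E n) ∧ E n ⊆ Cplus ι) →
    (Pairwise fun n m => Disjoint (E n) (E m)) →
    ∀ u : H, HasSum (fun n => P (E n) u) (P (⋃ n, E n) u)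

/-- The support of a qPVM: points of `ℂ_ι⁺` all of whose relatively open neighbourhoods
have non-zero projection. -/
def suppP (ι : ℍ) (P : Set ℍ → H → H) : Set ℍ :=
  {x ∈ Cplus ι | ∀ U : Set ℍ, IsOpen U → x ∈ U → ∃ u : H, P (U ∩ Cplus ι) u ≠ 0}

/-- An intertwining quaternionic PVM (iqPVM): a qPVM together with a commuting left
scalar multiplication. -/
def IsIQPVM (𝒮 : QHS H) (ι : ℍ) (P : Set ℍ → H → H) (L : ℍ → H → H) : Prop :=
  IsQPVM 𝒮 ι P ∧ 𝒮.IsLSM L ∧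
    ∀ E : Set ℍ, MeasurableSet E → E ⊆ Cplus ι →
      ∀ (q : ℍ) (u : H), P E (L q u) = L q (P E u)

/-- Data of a simple function: coefficients and pairwise disjoint Borel subsets of `ℂ_ι⁺`. -/
def IsSimpleData (ι : ℍ) {n : ℕ} (c : Fin n → ℍ) (E : Fin n → Set ℍ) : Prop :=
  (∀ ℓ, MeasurableSet (E ℓ) ∧ E ℓ ⊆ Cplus ι) ∧
    Pairwise fun ℓ ℓ' => Disjoint (E ℓ) (E ℓ')

/-- `S = ∫ φ d𝒫`, characterized by uniform approximation (on the support of `P`)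
by simple functions together with approximation of `S` by the corresponding
elementary integrals `Σ_ℓ L_{c_ℓ} P(E_ℓ)`. -/
def IsBoundedIntegral (𝒮 : QHS H) (ι : ℍ) (P : Set ℍ → H → H) (L : ℍ → H → H)
    (φ : ℍ → ℍ) (S : H → H) : Prop :=
  ∀ ε : ℝ, 0 < ε → ∃ (n : ℕ) (c : Fin n → ℍ) (E : Fin n → Set ℍ),
    IsSimpleData ι c E ∧
    (∀ x ∈ suppP ι P, ‖φ x - ∑ ℓ, Set.indicator (E ℓ) (fun _ => c ℓ) x‖ ≤ ε) ∧
    ∀ u : H, ‖S u - ∑ ℓ, L (c ℓ) (P (E ℓ) u)‖ ≤ ε * ‖u‖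

/-- The integral of a bounded measurable function with respect to an iqPVM
(defined by choice from the characterizing property). -/
def bInt (𝒮 : QHS H) (ι : ℍ) (P : Set ℍ → H → H) (L : ℍ → H → H) (φ : ℍ → ℍ) : H → H :=
  letI : Nonempty (H → H) := ⟨id⟩
  Classical.epsilon fun S : H → H => IsBoundedIntegral 𝒮 ι P L φ S

/-- The `P`-essential supremum norm `‖φ‖_∞^{(P)}`. -/
def essSupNorm (ι : ℍ) (P : Set ℍ → H → H) (φ : ℍ → ℍ) : ℝ :=
  sInf {k : ℝ | 0 ≤ k ∧ ∀ u : H, P {x ∈ Cplus ι | k < ‖φ x‖} u = 0}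

/-- `μ` is the positive Borel measure `μ_u^{(P)} : E ↦ ⟨u|P(E)u⟩`. -/
def muMatches (𝒮 : QHS H) (ι : ℍ) (P : Set ℍ → H → H) (u : H) (μ : Measure ℍ) : Prop :=
  ∀ E : Set ℍ, MeasurableSet E →
    μ E = ENNReal.ofReal ((𝒮.inn u (P (E ∩ Cplus ι) u)).re)

/-- The natural domain `D_f = {u : f ∈ L²(μ_u^{(P)})}` of `∫ f d𝒫`. -/
def Dnat (𝒮 : QHS H) (ι : ℍ) (P : Set ℍ → H → H) (f : ℍ → ℍ) : Set H :=
  {u : H | ∃ μ : Measure ℍ, muMatches 𝒮 ι P u μ ∧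
    (∫⁻ x, ENNReal.ofReal (‖f x‖ ^ 2) ∂μ) < ⊤}

/-- The truncation of `f` at level `n`. -/
def trunc (f : ℍ → ℍ) (n : ℕ) : ℍ → ℍ := fun x => if ‖f x‖ ≤ (n : ℝ) then f x else 0

/-- The integral of a possibly unbounded measurable function with respect to an iqPVM:
the strong limit of the integrals of its truncations. -/
def uInt (𝒮 : QHS H) (ι : ℍ) (P : Set ℍ → H → H) (L : ℍ → H → H) (f : ℍ → ℍ) : H → H :=
  fun u =>
    letI : Nonempty H := ⟨0⟩
    limUnder atTop fun n : ℕ => bInt 𝒮 ι P L (trunc f n) u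

/-- The inverse `(1 + T*T)⁻¹` of `1 + T*T` (by choice). -/
def CT (𝒮 : QHS H) (T : H → H) (D : Set H) : H → H :=
  letI : Nonempty (H → H) := ⟨id⟩
  Classical.epsilon fun C : H → H =>
    (∀ y : H, C y ∈ D ∧ T (C y) ∈ 𝒮.adjDom T D ∧ C y + 𝒮.adjOp T D (T (C y)) = y) ∧
      ∀ u ∈ D, T u ∈ 𝒮.adjDom T D → C (u + 𝒮.adjOp T D (T u)) = u

/-- The bounded transform `Z_T = T (1 + T*T)^{-1/2}`. -/
def ZT (𝒮 : QHS H) (T : H → H) (D : Set H) : H → H := fun u =>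
  T (𝒮.posSqrt (CT 𝒮 T D) u)

end

/-!
The vectors `L_{c_ℓ} P(E_ℓ) u` are pairwise orthogonal (the `E_ℓ` are disjoint and `L` commutes
with `P`) and `‖L_q w‖ = ‖q‖ ‖w‖`, so `‖(∫ s dP) u‖² = Σ_ℓ ‖c_ℓ‖² ‖P(E_ℓ) u‖²`, while
`Σ_ℓ ‖P(E_ℓ) u‖² ≤ ‖u‖²`. Hence `k ≥ 0` bounds `∫ s dP` exactly when `P(E_ℓ) = 0` for every `ℓ`
with `‖c_ℓ‖ > k`, which is exactly when `P({‖s‖ > k}) = 0`: the two infima run over the same set.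
-/

open Function

namespace QHS

variable {H : Type} [NormedAddCommGroup H] (𝒮 : QHS H)

lemma inn_zero_right (u : H) : 𝒮.inn u 0 = 0 := by
  simpa using 𝒮.inn_add_right u 0 0

def innRight (v : H) : H →+ ℍ where
  toFun := 𝒮.inn v
  map_zero' := 𝒮.inn_zero_right v
  map_add' := 𝒮.inn_add_right v

lemma coe_innRight (v : H) : ⇑(𝒮.innRight v) = 𝒮.inn v := rfl

lemma inn_sub_right (u v w : H) : 𝒮.inn u (v - w) = 𝒮.inn u v - 𝒮.inn u w :=
  (𝒮.innRight u).map_sub v w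

lemma inn_sum_right {α : Type*} (s : Finset α) (u : H) (v : α → H) :
    𝒮.inn u (∑ i ∈ s, v i) = ∑ i ∈ s, 𝒮.inn u (v i) :=
  map_sum (𝒮.innRight u) v s

lemma inn_add_left (u v w : H) : 𝒮.inn (u + v) w = 𝒮.inn u w + 𝒮.inn v w := by
  rw [𝒮.inn_conj, 𝒮.inn_add_right, star_add, ← 𝒮.inn_conj, ← 𝒮.inn_conj]

lemma inn_smul_left (u v : H) (q : ℍ) : 𝒮.inn (𝒮.smul u q) v = star q * 𝒮.inn u v := by
  rw [𝒮.inn_conj, 𝒮.inn_smul_right, star_mul, ← 𝒮.inn_conj]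

lemma inn_self (u : H) : 𝒮.inn u u = ((‖u‖ ^ 2 : ℝ) : ℍ) := by
  rw [𝒮.inn_self_real u, 𝒮.norm_sq']

lemma norm_smul (v : H) (t : ℍ) : ‖𝒮.smul v t‖ = ‖t‖ * ‖v‖ := by
  have h : ‖𝒮.smul v t‖ ^ 2 = (‖t‖ * ‖v‖) ^ 2 := by
    rw [𝒮.norm_sq', 𝒮.inn_smul_left, 𝒮.inn_smul_right, 𝒮.inn_self, ← mul_assoc,
      ← Quaternion.coe_commutes, mul_assoc, Quaternion.star_mul_self, ← Quaternion.coe_mul, Quaternion.re_coe,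
      Quaternion.normSq_eq_norm_mul_self]
    ring
  exact (pow_left_inj₀ (norm_nonneg _) (by positivity) two_ne_zero).mp h

lemma norm_add_sq (u v : H) : ‖u + v‖ ^ 2 = ‖u‖ ^ 2 + 2 * (𝒮.inn u v).re + ‖v‖ ^ 2 := by
  rw [𝒮.norm_sq', 𝒮.norm_sq', 𝒮.norm_sq', 𝒮.inn_add_left, 𝒮.inn_add_right, 𝒮.inn_add_right,
    𝒮.inn_conj v u]
  simp only [Quaternion.re_add, Quaternion.re_star]
  ring

lemma norm_add_sq_of_inn_eq_zero {u v : H} (h : 𝒮.inn u v = 0) :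
    ‖u + v‖ ^ 2 = ‖u‖ ^ 2 + ‖v‖ ^ 2 := by
  rw [𝒮.norm_add_sq, h, Quaternion.re_zero, mul_zero, add_zero]

lemma norm_sum_sq_of_pairwise_inn_eq_zero {α : Type*} (s : Finset α) (v : α → H)
    (h : (s : Set α).Pairwise fun i j => 𝒮.inn (v i) (v j) = 0) :
    ‖∑ i ∈ s, v i‖ ^ 2 = ∑ i ∈ s, ‖v i‖ ^ 2 := by
  classical
  induction s using Finset.induction_on with
  | empty => simp
  | insert a s ha ih =>
    have horth : 𝒮.inn (v a) (∑ i ∈ s, v i) = 0 := by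
      rw [𝒮.inn_sum_right]
      exact Finset.sum_eq_zero fun i hi =>
        h (by simp) (by simp [hi]) (by rintro rfl; exact ha hi)
    rw [Finset.sum_insert ha, Finset.sum_insert ha, 𝒮.norm_add_sq_of_inn_eq_zero horth,
      ih (h.mono (by simp))]

lemma norm_inn_le (u v : H) : ‖𝒮.inn u v‖ ≤ ‖u‖ * ‖v‖ := by
  rcases eq_or_ne v 0 with rfl | hv
  · simp [𝒮.inn_zero_right]
  set q := 𝒮.inn u v
  set r : ℝ := (‖v‖ ^ 2)⁻¹
  have hrv : r * ‖v‖ ^ 2 = 1 := inv_mul_cancel₀ (by positivity)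
  -- expand `0 ≤ ‖u + v t‖²` at `t = -q̄ / ‖v‖²`
  have hre : (q * -(star q * (r : ℍ))).re = -(r * ‖q‖ ^ 2) := by
    rw [mul_neg, ← mul_assoc, Quaternion.self_mul_star, ← Quaternion.coe_mul, Quaternion.re_neg,
      Quaternion.re_coe, Quaternion.normSq_eq_norm_mul_self]
    ring
  have hnorm : ‖-(star q * (r : ℍ))‖ = ‖q‖ * r := by
    rw [norm_neg, norm_mul, Quaternion.norm_star, Quaternion.norm_coe,
      Real.norm_of_nonneg (by positivity)]
  have key := 𝒮.norm_add_sq u (𝒮.smul v (-(star q * (r : ℍ))))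
  rw [𝒮.norm_smul, 𝒮.inn_smul_right, hre, hnorm] at key
  have hrq : r * ‖q‖ ^ 2 ≤ ‖u‖ ^ 2 := by
    nlinarith [sq_nonneg ‖u + 𝒮.smul v (-(star q * (r : ℍ)))‖]
  have hsq : ‖q‖ ^ 2 ≤ (‖u‖ * ‖v‖) ^ 2 :=
    calc ‖q‖ ^ 2 = r * ‖q‖ ^ 2 * ‖v‖ ^ 2 := by linear_combination -‖q‖ ^ 2 * hrv
      _ ≤ ‖u‖ ^ 2 * ‖v‖ ^ 2 := by gcongr
      _ = (‖u‖ * ‖v‖) ^ 2 := by ring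
  exact (pow_le_pow_iff_left₀ (norm_nonneg _) (by positivity) two_ne_zero).mp hsq

lemma continuous_inn_right (v : H) : Continuous (𝒮.inn v) :=
  AddMonoidHomClass.continuous_of_bound (𝒮.innRight v) ‖v‖ (𝒮.norm_inn_le v)

section LeftScalarMultiplication

variable {𝒮} {N : Set H} {L : ℍ → H → H}

lemma inn_lsm_of_mem (hN : 𝒮.IsHilbertBasis N) (hL : 𝒮.IsInducedLSM N L) {z : H} (hz : z ∈ N)
    (q : ℍ) (w : H) : 𝒮.inn z (L q w) = q * 𝒮.inn z w := by
  classical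
  have hzz : 𝒮.inn z z = 1 := by rw [𝒮.inn_self, hN.1 z hz]; norm_num
  have hterm : ∀ y : N, 𝒮.inn z (𝒮.smul y (q * 𝒮.inn y w)) =
      if y = ⟨z, hz⟩ then q * 𝒮.inn z w else 0 := by
    rintro ⟨y, hy⟩
    rw [𝒮.inn_smul_right]
    split_ifs with h
    · cases h
      rw [hzz, one_mul]
    · rw [hN.2.1 z hz y hy fun hzy => h (Subtype.ext hzy.symm), zero_mul]
  have h := (hL q w).map (𝒮.innRight z) (𝒮.continuous_inn_right z)
  simp only [comp_def, coe_innRight, hterm] at h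
  exact h.unique (hasSum_ite_eq _ _)

lemma lsm_one (hN : 𝒮.IsHilbertBasis N) (hL : 𝒮.IsInducedLSM N L) (w : H) : L 1 w = w :=
  sub_eq_zero.mp <| hN.2.2 _ fun z hz => by
    rw [𝒮.inn_sub_right, inn_lsm_of_mem hN hL hz, one_mul, sub_self]

lemma hasSum_norm_sq_lsm (hN : 𝒮.IsHilbertBasis N) (hL : 𝒮.IsInducedLSM N L) (q : ℍ) (w : H) :
    HasSum (fun z : N => ‖q‖ ^ 2 * ‖𝒮.inn z w‖ ^ 2) (‖L q w‖ ^ 2) := by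
  have hterm : ∀ z : N, 𝒮.inn (L q w) (𝒮.smul z (q * 𝒮.inn z w)) =
      ((‖q‖ ^ 2 * ‖𝒮.inn z w‖ ^ 2 : ℝ) : ℍ) := by
    intro z
    rw [𝒮.inn_smul_right, 𝒮.inn_conj, inn_lsm_of_mem hN hL z.2, Quaternion.star_mul_self,
      Quaternion.normSq_eq_norm_mul_self, norm_mul]
    congr 1
    ring
  have h := (hL q w).map (𝒮.innRight (L q w)) (𝒮.continuous_inn_right _)
  simp only [comp_def, coe_innRight, hterm, 𝒮.inn_self] at h
  exact Quaternion.hasSum_coe.mp h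

lemma norm_lsm (hN : 𝒮.IsHilbertBasis N) (hL : 𝒮.IsInducedLSM N L) (q : ℍ) (w : H) :
    ‖L q w‖ = ‖q‖ * ‖w‖ := by
  have hParseval : HasSum (fun z : N => ‖𝒮.inn z w‖ ^ 2) (‖w‖ ^ 2) := by
    simpa [lsm_one hN hL] using hasSum_norm_sq_lsm hN hL 1 w
  have h := (hasSum_norm_sq_lsm hN hL q w).unique (hParseval.mul_left (‖q‖ ^ 2))
  rw [← mul_pow] at h
  exact (pow_left_inj₀ (norm_nonneg _) (by positivity) two_ne_zero).mp h

end LeftScalarMultiplication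

end QHS

namespace IsQPVM

variable {H : Type} [NormedAddCommGroup H] {𝒮 : QHS H} {ι : ℍ} {P : Set ℍ → H → H}
  {E F : Set ℍ}

lemma apply_empty (hP : IsQPVM 𝒮 ι P) (u : H) : P ∅ u = 0 := by
  have h := hP.sigma_add (fun _ => ∅) (fun _ => ⟨.empty, Set.empty_subset _⟩)
    (fun _ _ _ => Set.disjoint_empty _) u
  exact tendsto_nhds_unique tendsto_const_nhds h.summable.tendsto_atTop_zero

lemma apply_zero (hP : IsQPVM 𝒮 ι P) (hE : MeasurableSet E) (hEι : E ⊆ Cplus ι) : P E 0 = 0 := by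
  simpa using (hP.proj_linear E hE hEι).1 0 0

lemma apply_apply_of_subset (hP : IsQPVM 𝒮 ι P) (hE : MeasurableSet E) (hEι : E ⊆ Cplus ι)
    (hF : MeasurableSet F) (hFι : F ⊆ Cplus ι) (hEF : E ⊆ F) (u : H) : P E (P F u) = P E u := by
  rw [← hP.inter E F hE hEι hF hFι, Set.inter_eq_left.mpr hEF]

lemma apply_apply_of_disjoint (hP : IsQPVM 𝒮 ι P) (hE : MeasurableSet E) (hEι : E ⊆ Cplus ι)
    (hF : MeasurableSet F) (hFι : F ⊆ Cplus ι) (hEF : Disjoint E F) (u : H) : P E (P F u) = 0 := by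
  rw [← hP.inter E F hE hEι hF hFι, hEF.inter_eq, hP.apply_empty]

lemma inn_apply_of_disjoint (hP : IsQPVM 𝒮 ι P) (hE : MeasurableSet E) (hEι : E ⊆ Cplus ι)
    (hF : MeasurableSet F) (hFι : F ⊆ Cplus ι) (hEF : Disjoint E F) (u v : H) :
    𝒮.inn (P E u) (P F v) = 0 := by
  rw [hP.proj_sa E hE hEι, hP.apply_apply_of_disjoint hE hEι hF hFι hEF, 𝒮.inn_zero_right]

lemma norm_apply_le (hP : IsQPVM 𝒮 ι P) (hE : MeasurableSet E) (hEι : E ⊆ Cplus ι) (u : H) :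
    ‖P E u‖ ≤ ‖u‖ := by
  have horth : 𝒮.inn (P E u) (u - P E u) = 0 := by
    rw [𝒮.inn_sub_right, hP.proj_sa E hE hEι u u, hP.proj_sa E hE hEι u,
      hP.proj_idem E hE hEι, sub_self]
  have h := 𝒮.norm_add_sq_of_inn_eq_zero horth
  rw [add_sub_cancel] at h
  refine (pow_le_pow_iff_left₀ (norm_nonneg _) (norm_nonneg _) two_ne_zero).mp ?_
  rw [h]
  exact le_add_of_nonneg_right (sq_nonneg _)

lemma apply_iUnion_of_fintype (hP : IsQPVM 𝒮 ι P) {α : Type*} [Fintype α] (F : α → Set ℍ)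
    (hF : ∀ i, MeasurableSet (F i) ∧ F i ⊆ Cplus ι)
    (hdisj : Pairwise fun i j => Disjoint (F i) (F j)) (u : H) :
    P (⋃ i, F i) u = ∑ i, P (F i) u := by
  obtain ⟨f, hf⟩ := exists_injective_nat α
  set G : ℕ → Set ℍ := extend f F fun _ => ∅
  have hG : ∀ i, G (f i) = F i := hf.extend_apply F _
  have hG_cases : ∀ k, (∃ i, f i = k) ∨ G k = ∅ := fun k => (em _).imp_right (extend_apply' _ _ k)
  have hGι : ∀ k, MeasurableSet (G k) ∧ G k ⊆ Cplus ι := by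
    intro k
    rcases hG_cases k with ⟨i, rfl⟩ | h0
    · rw [hG]; exact hF i
    · rw [h0]; exact ⟨.empty, Set.empty_subset _⟩
  have hGdisj : Pairwise fun k l => Disjoint (G k) (G l) := by
    intro k l hkl
    rcases hG_cases k with ⟨i, rfl⟩ | h0
    · rcases hG_cases l with ⟨j, rfl⟩ | h0
      · rw [hG, hG]; exact hdisj (ne_of_apply_ne f hkl)
      · rw [h0]; exact Set.disjoint_empty _
    · rw [h0]; exact Set.empty_disjoint _
  have hGunion : ⋃ k, G k = ⋃ i, F i := by
    refine subset_antisymm (Set.iUnion_subset fun k => ?_)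
      (Set.iUnion_subset fun i => hG i ▸ Set.subset_iUnion G (f i))
    rcases hG_cases k with ⟨i, rfl⟩ | h0
    · rw [hG]; exact Set.subset_iUnion F i
    · rw [h0]; exact Set.empty_subset _
  have h := hP.sigma_add G hGι hGdisj u
  rw [hGunion, ← hf.hasSum_iff fun k hk => by
    rw [(hG_cases k).resolve_left hk, hP.apply_empty]] at h
  exact h.unique (by simpa only [comp_def, hG] using hasSum_fintype _)

lemma sum_norm_sq_apply_le (hP : IsQPVM 𝒮 ι P) {α : Type*} [Fintype α] {F : α → Set ℍ}
    (hF : ∀ i, MeasurableSet (F i) ∧ F i ⊆ Cplus ι)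
    (hdisj : Pairwise fun i j => Disjoint (F i) (F j)) (u : H) :
    ∑ i, ‖P (F i) u‖ ^ 2 ≤ ‖u‖ ^ 2 := by
  rw [← 𝒮.norm_sum_sq_of_pairwise_inn_eq_zero _ _ fun i _ j _ hij =>
    hP.inn_apply_of_disjoint (hF i).1 (hF i).2 (hF j).1 (hF j).2 (hdisj hij) u u,
    ← hP.apply_iUnion_of_fintype F hF hdisj u]
  exact pow_le_pow_left₀ (norm_nonneg _) (hP.norm_apply_le (.iUnion fun i => (hF i).1)
    (Set.iUnion_subset fun i => (hF i).2) u) 2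

end IsQPVM

section SimpleFunction

variable {H : Type} [NormedAddCommGroup H] {α : Type*} [Fintype α]

noncomputable def simpleFn (c : α → ℍ) (E : α → Set ℍ) : ℍ → ℍ :=
  fun x => ∑ ℓ, (E ℓ).indicator (fun _ => c ℓ) x

def simpleIntegral (L : ℍ → H → H) (P : Set ℍ → H → H) (c : α → ℍ) (E : α → Set ℍ) : H → H :=
  fun u => ∑ ℓ, L (c ℓ) (P (E ℓ) u)

variable {c : α → ℍ} {E : α → Set ℍ}

lemma simpleFn_apply_of_mem (hdisj : Pairwise fun ℓ ℓ' => Disjoint (E ℓ) (E ℓ')) {ℓ : α} {x : ℍ}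
    (hx : x ∈ E ℓ) : simpleFn c E x = c ℓ := by
  classical
  refine (Finset.sum_eq_single ℓ (fun m _ hm => ?_) (by simp)).trans (Set.indicator_of_mem hx _)
  exact Set.indicator_of_notMem (fun hxm => Set.disjoint_left.mp (hdisj hm) hxm hx) _

lemma simpleFn_apply_of_forall_notMem {x : ℍ} (hx : ∀ ℓ, x ∉ E ℓ) : simpleFn c E x = 0 :=
  Finset.sum_eq_zero fun ℓ _ => Set.indicator_of_notMem (hx ℓ) _

lemma measurable_simpleFn (hE : ∀ ℓ, MeasurableSet (E ℓ)) : Measurable (simpleFn c E) :=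
  Finset.measurable_sum _ fun ℓ _ => measurable_const.indicator (hE ℓ)

variable {𝒮 : QHS H} {ι : ℍ} {P : Set ℍ → H → H}

lemma apply_superlevel_simpleFn_eq_zero_iff (hP : IsQPVM 𝒮 ι P) (hE : ∀ ℓ, MeasurableSet (E ℓ) ∧ E ℓ ⊆ Cplus ι)
    (hdisj : Pairwise fun ℓ ℓ' => Disjoint (E ℓ) (E ℓ')) {k : ℝ} (hk : 0 ≤ k) :
    (∀ u, P {x ∈ Cplus ι | k < ‖simpleFn c E x‖} u = 0) ↔
      ∀ ℓ, k < ‖c ℓ‖ → ∀ u, P (E ℓ) u = 0 := by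
  set S := {x | k < ‖simpleFn c E x‖}
  -- off `⋃ ℓ, E ℓ` the simple function vanishes, so it does not exceed `k ≥ 0` there
  have hunion : {x ∈ Cplus ι | k < ‖simpleFn c E x‖} = ⋃ ℓ, E ℓ ∩ S := by
    ext x
    simp only [Set.mem_iUnion, Set.mem_inter_iff]
    refine ⟨fun ⟨_, hxk⟩ => ?_, fun ⟨ℓ, hxℓ, hxk⟩ => ⟨(hE ℓ).2 hxℓ, hxk⟩⟩
    by_contra! hx
    rw [simpleFn_apply_of_forall_notMem fun ℓ hxℓ => hx ℓ hxℓ hxk, norm_zero] at hxk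
    exact hxk.not_ge hk
  have hS : MeasurableSet S :=
    measurableSet_lt measurable_const (measurable_simpleFn fun ℓ => (hE ℓ).1).norm
  have hinter : ∀ ℓ, MeasurableSet (E ℓ ∩ S) ∧ E ℓ ∩ S ⊆ Cplus ι :=
    fun ℓ => ⟨(hE ℓ).1.inter hS, Set.inter_subset_left.trans (hE ℓ).2⟩
  have hsub : ∀ ℓ, k < ‖c ℓ‖ → E ℓ ⊆ S := fun ℓ hℓ x hx => by
    simpa only [S, Set.mem_ofPred_eq, simpleFn_apply_of_mem hdisj hx] using hℓ
  rw [hunion]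
  have hG : MeasurableSet (⋃ ℓ, E ℓ ∩ S) := .iUnion fun ℓ => (hinter ℓ).1
  have hGι : ⋃ ℓ, E ℓ ∩ S ⊆ Cplus ι := Set.iUnion_subset fun ℓ => (hinter ℓ).2
  constructor
  · intro hnull ℓ hℓ u
    have hEG : E ℓ ⊆ ⋃ ℓ, E ℓ ∩ S :=
      (Set.subset_inter le_rfl (hsub ℓ hℓ)).trans (Set.subset_iUnion (fun ℓ => E ℓ ∩ S) ℓ)
    rw [← hP.apply_apply_of_subset (hE ℓ).1 (hE ℓ).2 hG hGι hEG, hnull,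
      hP.apply_zero (hE ℓ).1 (hE ℓ).2]
  · intro hzero u
    rw [hP.apply_iUnion_of_fintype _ hinter
      fun i j hij => (hdisj hij).mono Set.inter_subset_left Set.inter_subset_left]
    refine Finset.sum_eq_zero fun ℓ _ => ?_
    by_cases hℓ : k < ‖c ℓ‖
    · rw [Set.inter_eq_left.mpr (hsub ℓ hℓ), hzero ℓ hℓ]
    · have hempty : E ℓ ∩ S = ∅ := Set.eq_empty_of_forall_notMem fun x ⟨hx, hxk⟩ => by
        simp only [S, Set.mem_ofPred_eq, simpleFn_apply_of_mem hdisj hx] at hxk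
        exact hℓ hxk
      rw [hempty, hP.apply_empty]

variable {L : ℍ → H → H}

lemma norm_simpleIntegral_sq (hP : IsQPVM 𝒮 ι P) (hL : ∀ q w, ‖L q w‖ = ‖q‖ * ‖w‖)
    (hcomm : ∀ F : Set ℍ, MeasurableSet F → F ⊆ Cplus ι → ∀ q u, P F (L q u) = L q (P F u))
    (hE : ∀ ℓ, MeasurableSet (E ℓ) ∧ E ℓ ⊆ Cplus ι)
    (hdisj : Pairwise fun ℓ ℓ' => Disjoint (E ℓ) (E ℓ')) (u : H) :
    ‖simpleIntegral L P c E u‖ ^ 2 = ∑ ℓ, ‖c ℓ‖ ^ 2 * ‖P (E ℓ) u‖ ^ 2 := by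
  rw [simpleIntegral, 𝒮.norm_sum_sq_of_pairwise_inn_eq_zero]
  · simp only [hL, mul_pow]
  · intro i _ j _ hij
    rw [← hcomm _ (hE i).1 (hE i).2, ← hcomm _ (hE j).1 (hE j).2]
    exact hP.inn_apply_of_disjoint (hE i).1 (hE i).2 (hE j).1 (hE j).2 (hdisj hij) _ _

lemma norm_simpleIntegral_le_iff (hP : IsQPVM 𝒮 ι P) (hL : ∀ q w, ‖L q w‖ = ‖q‖ * ‖w‖)
    (hcomm : ∀ F : Set ℍ, MeasurableSet F → F ⊆ Cplus ι → ∀ q u, P F (L q u) = L q (P F u))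
    (hE : ∀ ℓ, MeasurableSet (E ℓ) ∧ E ℓ ⊆ Cplus ι)
    (hdisj : Pairwise fun ℓ ℓ' => Disjoint (E ℓ) (E ℓ')) {k : ℝ} (hk : 0 ≤ k) :
    (∀ u, ‖simpleIntegral L P c E u‖ ≤ k * ‖u‖) ↔ ∀ ℓ, k < ‖c ℓ‖ → ∀ u, P (E ℓ) u = 0 := by
  classical
  have hnorm := norm_simpleIntegral_sq (c := c) hP hL hcomm hE hdisj
  constructor
  · intro hbound ℓ hℓ u
    by_contra hne
    have hrange : ‖simpleIntegral L P c E (P (E ℓ) u)‖ ^ 2 = (‖c ℓ‖ * ‖P (E ℓ) u‖) ^ 2 := by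
      rw [hnorm, Finset.sum_eq_single ℓ, hP.proj_idem _ (hE ℓ).1 (hE ℓ).2, mul_pow]
      · intro m _ hm
        rw [hP.apply_apply_of_disjoint (hE m).1 (hE m).2 (hE ℓ).1 (hE ℓ).2 (hdisj hm)]
        simp
      · simp
    have h := hbound (P (E ℓ) u)
    rw [(pow_left_inj₀ (norm_nonneg _) (by positivity) two_ne_zero).mp hrange] at h
    exact hℓ.not_ge (le_of_mul_le_mul_right h (norm_pos_iff.mpr hne))
  · intro hzero u
    have hterm : ∀ ℓ, ‖c ℓ‖ ^ 2 * ‖P (E ℓ) u‖ ^ 2 ≤ k ^ 2 * ‖P (E ℓ) u‖ ^ 2 := by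
      intro ℓ
      by_cases hℓ : k < ‖c ℓ‖
      · simp [hzero ℓ hℓ u]
      · gcongr
        exact not_lt.mp hℓ
    refine (pow_le_pow_iff_left₀ (norm_nonneg _) (by positivity) two_ne_zero).mp ?_
    calc ‖simpleIntegral L P c E u‖ ^ 2 = ∑ ℓ, ‖c ℓ‖ ^ 2 * ‖P (E ℓ) u‖ ^ 2 := hnorm u
      _ ≤ ∑ ℓ, k ^ 2 * ‖P (E ℓ) u‖ ^ 2 := Finset.sum_le_sum fun ℓ _ => hterm ℓ
      _ = k ^ 2 * ∑ ℓ, ‖P (E ℓ) u‖ ^ 2 := (Finset.mul_sum _ _ _).symm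
      _ ≤ k ^ 2 * ‖u‖ ^ 2 := by gcongr; exact hP.sum_norm_sq_apply_le hE hdisj u
      _ = (k * ‖u‖) ^ 2 := by ring

end SimpleFunction

theorem simple_integral_norm_general
    {H : Type} [NormedAddCommGroup H] (𝒮 : QHS H)
    (ι : ℍ)
    (P : Set ℍ → H → H) (L : ℍ → H → H)
    (h𝒫 : IsIQPVM 𝒮 ι P L)
    (n : ℕ) (c : Fin n → ℍ) (E : Fin n → Set ℍ)
    (hdata : IsSimpleData ι c E) :
    opNorm (fun u : H => ∑ ℓ : Fin n, L (c ℓ) (P (E ℓ) u))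
      = essSupNorm ι P (fun x => ∑ ℓ : Fin n, Set.indicator (E ℓ) (fun _ => c ℓ) x) := by
  obtain ⟨hP, ⟨N, hN, hLN⟩, hcomm⟩ := h𝒫
  obtain ⟨hE, hdisj⟩ := hdata
  change opNorm (simpleIntegral L P c E) = essSupNorm ι P (simpleFn c E)
  rw [opNorm, essSupNorm]
  congr 1
  ext k
  refine and_congr_right fun hk => ?_
  rw [norm_simpleIntegral_le_iff hP (QHS.norm_lsm hN hLN) hcomm hE hdisj hk,
    apply_superlevel_simpleFn_eq_zero_iff hP hE hdisj hk]

/-- For an iqPVM `(P, L)` over `ℂ_ι⁺` and a simple function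
`s = Σ_ℓ S_ℓ χ_{E_ℓ}` (pairwise disjoint Borel `E_ℓ ⊆ ℂ_ι⁺`), the elementary
integral `∫ s dP = Σ_ℓ L_{S_ℓ} P(E_ℓ)` satisfies `‖∫ s dP‖ = ‖s‖_∞^{(P)}`. -/
theorem simple_integral_norm
    {H : Type} [NormedAddCommGroup H] [CompleteSpace H] (𝒮 : QHS H)
    (ι : ℍ) (hι : ι ^ 2 = -1)
    (P : Set ℍ → H → H) (L : ℍ → H → H)
    (h𝒫 : IsIQPVM 𝒮 ι P L)
    (n : ℕ) (c : Fin n → ℍ) (E : Fin n → Set ℍ)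
    (hdata : IsSimpleData ι c E) :
    opNorm (fun u : H => ∑ ℓ : Fin n, L (c ℓ) (P (E ℓ) u))
      = essSupNorm ι P (fun x => ∑ ℓ : Fin n, Set.indicator (E ℓ) (fun _ => c ℓ) x) :=
  simple_integral_norm_general 𝒮 ι P L h𝒫 n c E hdata
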